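/- Let a be a nonzero integer with 1 ≤ |a| ≤ y, and let s₁, s₂ be complex numbers with Re s₁ > 0 and Re s₂ > 1. Then F_a(s₁,s₂;y) = F₁(s₁,s₂;y) · ψ₂(s₁,s₂;a), where F₁(s₁,s₂;y) = ζ(s₁,y) · ∏_{p > y} ( 1 + 1/((1 − 1/p)(p^{s₂+1} − 1)) ) · ∏_{p ≤ y} ( 1 + (1 − p^{−s₁})/((1 − 1/p)(p^{s₂+1} − 1)) ) and ψ₂(s₁,s₂;a) = g_a(s₂+1) · ∏_{p | a} ( 1 + (1 − p^{1−s₁})/((1 − 1/p) p^{s₂+2}) )^{−1}, the products over p being over primes. -/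

import Mathlib

open Real Complex Finset MeasureTheory
open scoped BigOperators Topology Classical

noncomputable section

/-- Largest prime factor of `n`, with the convention `P(1) = 1`. -/
def Pmax (n : ℕ) : ℕ := max 1 (n.primeFactors.sup id)

/-- The finite set `S(x,y)` of `y`-friable positive integers up to `x`. -/
def Sxy (x y : ℝ) : Finset ℕ :=
  (Finset.Icc 1 ⌊x⌋₊).filter fun n : ℕ => (Pmax n : ℝ) ≤ y

/-- `Ψ(x,y)` -/
def Psi (x y : ℝ) : ℕ := (Sxy x y).card

/-- `Ψ(x,y;a,q)` -/
def PsiMod (x y : ℝ) (a : ℤ) (q : ℕ) : ℕ :=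
  ((Sxy x y).filter fun n : ℕ => (n : ℤ) ≡ a [ZMOD (q : ℤ)]).card

/-- indicator of `a ∈ S(x,y)` -/
def indS (x y : ℝ) (a : ℤ) : ℕ :=
  if 1 ≤ a ∧ (a : ℝ) ≤ x ∧ (Pmax a.toNat : ℝ) ≤ y then 1 else 0

/-- `Ψ*(x,y;a,q)` -/
def PsiStar (x y : ℝ) (a : ℤ) (q : ℕ) : ℝ :=
  (PsiMod x y a q : ℝ) - (indS x y a : ℝ)

/-- `Ψ_q(x,y)` -/
def PsiCop (x y : ℝ) (q : ℕ) : ℕ :=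
  ((Sxy x y).filter fun n : ℕ => n.Coprime q).card

/-- `E*(x,y;a,q)` for `gcd(a,q) = 1` -/
def Estar (x y : ℝ) (a : ℤ) (q : ℕ) : ℝ :=
  PsiStar x y a q - (PsiCop x y q : ℝ) / (q.totient : ℝ)

/-- `E*(x,y;a,q)` for general `q`, with `d = gcd(|a|,q)` -/
def EstarGen (x y : ℝ) (a : ℤ) (q : ℕ) : ℝ :=
  PsiStar x y a q -
    (PsiCop (x / (a.natAbs.gcd q : ℝ)) y (q / a.natAbs.gcd q) : ℝ) /
      ((q / a.natAbs.gcd q).totient : ℝ)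

/-- `σ(x,y,M;a)` -/
def sigmaS (x y M : ℝ) (a : ℤ) : ℝ :=
  ∑ q ∈ (Finset.Icc 1 ⌊x / M⌋₊).filter (fun q : ℕ => q.Coprime a.natAbs), Estar x y a q

/-- `H(u) = exp(u/(log(u+1))²)` -/
def Hf (u : ℝ) : ℝ := Real.exp (u / (Real.log (u + 1)) ^ 2)

/-- `L_ε(M) = exp((log M)^{3/5-ε})` -/
def Lf (ε M : ℝ) : ℝ := Real.exp ((Real.log M) ^ ((3 : ℝ) / 5 - ε))

/-- divisor function `τ` -/
def tau (n : ℕ) : ℕ := n.divisors.card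

/-- 3-fold divisor function `τ₃ = 1 * 1 * 1` -/
def tau3 (n : ℕ) : ℕ := ∑ d ∈ n.divisors, tau (n / d)

/-- 4-fold divisor function `τ₄ = 1 * τ₃` -/
def tau4 (n : ℕ) : ℕ := ∑ d ∈ n.divisors, tau3 (n / d)

/-- the Dickman function -/
def IsDickman (ρ : ℝ → ℝ) : Prop :=
  ContinuousOn ρ (Set.Ioi 0) ∧ (∀ v : ℝ, 0 < v → v ≤ 1 → ρ v = 1) ∧
    ∀ v : ℝ, 1 < v → HasDerivAt ρ (-ρ (v - 1) / v) v

/-- `α` is the saddle point `α(x,y)` -/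
def IsSaddle (x y α : ℝ) : Prop :=
  0 < α ∧
    ∑ p ∈ (Finset.range (⌊y⌋₊ + 1)).filter Nat.Prime,
      Real.log p / ((p : ℝ) ^ α - 1) = Real.log x

/-- `ζ(s,y)`, the `y`-friable part of the Riemann zeta function -/
def zetaY (s : ℂ) (y : ℝ) : ℂ :=
  ∑' n : ℕ, if 1 ≤ n ∧ (Pmax n : ℝ) ≤ y then (n : ℂ) ^ (-s) else 0

/-- `Φ₂(s;a) = Σ_{(n,a)=1} 1/(φ(n) n^s)` -/
def Phi2 (s : ℂ) (a : ℤ) : ℂ :=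
  ∑' n : ℕ, if 1 ≤ n ∧ n.Coprime a.natAbs then
    1 / ((n.totient : ℂ) * (n : ℂ) ^ s) else 0

/-- `F_a(s₁,s₂;y)` -/
def Fa (a : ℤ) (s₁ s₂ : ℂ) (y : ℝ) : ℂ :=
  ∑' n : ℕ, if 1 ≤ n ∧ (Pmax n : ℝ) ≤ y then (n : ℂ) ^ (-s₁) * Phi2 s₂ (a * n) else 0

/-- `g_m(s) = ∏_{p ∣ m} (1 - p^{-s})` -/
def gI (m : ℤ) (s : ℂ) : ℂ := ∏ p ∈ m.natAbs.primeFactors, (1 - (p : ℂ) ^ (-s))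

/-- `F₁(s₁,s₂;y)` -/
def F1 (s₁ s₂ : ℂ) (y : ℝ) : ℂ :=
  zetaY s₁ y *
    (∏' p : Nat.Primes, if y < ((p : ℕ) : ℝ) then
      1 + 1 / ((1 - 1 / ((p : ℕ) : ℂ)) * (((p : ℕ) : ℂ) ^ (s₂ + 1) - 1)) else 1) *
    (∏' p : Nat.Primes, if ((p : ℕ) : ℝ) ≤ y then
      1 + (1 - ((p : ℕ) : ℂ) ^ (-s₁)) /
        ((1 - 1 / ((p : ℕ) : ℂ)) * (((p : ℕ) : ℂ) ^ (s₂ + 1) - 1)) else 1)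

/-- `ψ₂(s₁,s₂;a)` -/
def psi2 (s₁ s₂ : ℂ) (a : ℤ) : ℂ :=
  gI a (s₂ + 1) *
    ∏ p ∈ a.natAbs.primeFactors,
      (1 + (1 - (p : ℂ) ^ ((1 : ℂ) - s₁)) / ((1 - 1 / (p : ℂ)) * (p : ℂ) ^ (s₂ + 2)))⁻¹

/-- `K_a(s₁,s₂)` -/
def Ka (s₁ s₂ : ℂ) (a : ℤ) : ℂ :=
  gI a s₁ / gI a (s₁ + s₂) *
    ∏ p ∈ a.natAbs.primeFactors,
      (1 + (1 - (p : ℂ) ^ (-s₂)) / (p : ℂ) ^ ((a.natAbs.factorization p : ℂ) * (s₁ + s₂)) *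
        (1 / ((p : ℂ) ^ s₁ - 1) -
          (1 - (p : ℂ) ^ (-s₁ - s₂)) / (((p : ℂ) - 1) * (1 - (p : ℂ) ^ (-s₂ - 1)))))

/-- `ψ₁(s₁,s₂;a) = ψ₂(s₁,s₂;a) K_a(s₁,s₂)` -/
def psi1 (s₁ s₂ : ℂ) (a : ℤ) : ℂ := psi2 s₁ s₂ a * Ka s₁ s₂ a

/-- `H₁(s₁,s₂;y)` -/
def H1 (s₁ s₂ : ℂ) (y : ℝ) : ℂ :=
  (∏' p : Nat.Primes, if y < ((p : ℕ) : ℝ) then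
    1 + (1 - ((p : ℕ) : ℂ) ^ (s₂ + 1)) /
      (((p : ℕ) : ℂ) ^ (s₂ + 3) * (1 - 1 / ((p : ℕ) : ℂ))) else 1) *
  (∏' p : Nat.Primes, if ((p : ℕ) : ℝ) ≤ y then
    1 - (((p : ℕ) : ℂ) ^ (-s₂ - 2) + ((p : ℕ) : ℂ) ^ (-s₁) -
        ((p : ℕ) : ℂ) ^ (-s₁ - s₂ - 1) - 1 / ((p : ℕ) : ℂ)) /
      (((p : ℕ) : ℂ) ^ (s₂ + 2) * (1 - 1 / ((p : ℕ) : ℂ)) *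
        (1 - ((p : ℕ) : ℂ) ^ (-s₁ - s₂ - 1))) else 1)

/-- `r_y`, the `y`-friable part of `r` -/
def friPart (y : ℝ) (r : ℕ) : ℕ :=
  ∏ p ∈ r.primeFactors.filter (fun p : ℕ => (p : ℝ) ≤ y), p ^ r.factorization p

/-- `G_a(s₁,s₂;y)` -/
def Ga (a : ℤ) (s₁ s₂ : ℂ) (y : ℝ) : ℂ :=
  ∑ k ∈ a.natAbs.divisors,
    ∑ ℓ ∈ k.divisors.filter (fun ℓ : ℕ => ℓ.Coprime (a / (k : ℤ)).natAbs),
      ((ArithmeticFunction.moebius ℓ : ℤ) : ℂ) / (ℓ.totient : ℂ) *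
        ∑' r : ℕ, if 1 ≤ r ∧ r.Coprime (a / (k : ℤ)).natAbs then
          (ℓ.totient : ℂ) / (((r * ℓ).totient : ℂ) * ((r * k : ℕ) : ℂ) ^ s₂) *
            (gI (((a / (k : ℤ)).natAbs * friPart y r * ℓ : ℕ) : ℤ) s₁ / ((k : ℕ) : ℂ) ^ s₁) *
            zetaY s₁ y
        else 0

/-- `G̃_a(s₁,s₂;y) = G_a(s₁,s₂;y) ζ(s₁+s₂+1,y)/ζ(s₁+s₂+1)` -/
def GaTilde (a : ℤ) (s₁ s₂ : ℂ) (y : ℝ) : ℂ :=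
  Ga a s₁ s₂ y * zetaY (s₁ + s₂ + 1) y / riemannZeta (s₁ + s₂ + 1)

/-- `σ₁(x,y,M;a)` -/
def sigma1 (x y M : ℝ) (a : ℤ) : ℝ :=
  ∑ q ∈ (Finset.Icc 1 ⌊x⌋₊).filter (fun q : ℕ => x / M < (q : ℝ) ∧ q.Coprime a.natAbs),
    PsiStar x y a q

/-- `σ̃₁(x,y,M;a)` -/
def sigma1T (x y M : ℝ) (a : ℤ) : ℝ :=
  ∑ k ∈ a.natAbs.divisors,
    ∑ ℓ ∈ k.divisors.filter (fun ℓ : ℕ => ℓ.Coprime (a / (k : ℤ)).natAbs),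
      ((ArithmeticFunction.moebius ℓ : ℤ) : ℝ) *
        ∑ r ∈ (Finset.Icc 1 ⌊M⌋₊).filter
            (fun r : ℕ => (r : ℝ) < M / (k : ℝ) ∧ r.Coprime (a / (k : ℤ)).natAbs),
          ((PsiCop (x / (k : ℝ)) y ((a / (k : ℤ)).natAbs * r * ℓ) : ℝ) -
            (PsiCop ((r : ℝ) * x / M) y ((a / (k : ℤ)).natAbs * r * ℓ) : ℝ)) /
            ((r * ℓ).totient : ℝ)

/-- `σ₂(x,y,M;a)` -/
def sigma2 (x y M : ℝ) (a : ℤ) : ℝ :=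
  ∑ q ∈ (Finset.Icc 1 ⌊x⌋₊).filter (fun q : ℕ => x / M < (q : ℝ) ∧ q.Coprime a.natAbs),
    (PsiCop x y q : ℝ) / (q.totient : ℝ)

/-- `I(x,y;M)` truncated at height `T`, with `α` the saddle point -/
def Iint (x y α T : ℝ) : ℂ :=
  (1 / (2 * (π : ℂ))) * ∫ τ in (-T)..T,
    zetaY ((α : ℂ) + (τ : ℂ) * Complex.I) y /
      (riemannZeta ((α : ℂ) + (τ : ℂ) * Complex.I) *
        (((α : ℂ) + (τ : ℂ) * Complex.I) - 1)) *
      (x : ℂ) ^ (((α : ℂ) + (τ : ℂ) * Complex.I) - 1)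

/-- `Φ_μ(x,y) = Σ_{n ≤ x, P⁻(n) > y} μ(n)/n` -/
def PhiMu (x y : ℝ) : ℝ :=
  ∑ n ∈ (Finset.Icc 1 ⌊x⌋₊).filter (fun n : ℕ => ∀ p : ℕ, p.Prime → p ∣ n → y < (p : ℝ)),
    ((ArithmeticFunction.moebius n : ℤ) : ℝ) / (n : ℝ)

/-- `ψ*(x;q,a) = Σ_{n ≤ x, n ≡ a (q), n ≠ a} Λ(n)` -/
def psiCheb (x : ℝ) (q : ℕ) (a : ℤ) : ℝ :=
  ∑ n ∈ (Finset.Icc 1 ⌊x⌋₊).filter (fun n : ℕ => (n : ℤ) ≡ a [ZMOD (q : ℤ)] ∧ (n : ℤ) ≠ a),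
    ArithmeticFunction.vonMangoldt n

/-! Both sides are Euler products. For a `y`-friable `m`, the Euler product of `Φ₂(s₂; m)` splits
into the tail `T = ∏_{p > y} E_p` and the factors `E_p = Σ_e 1/(φ(p^e) p^{e s₂})` at the primes
`p ≤ y` not dividing `m`. Since `a` is `y`-friable, dividing by `E_p` at the primes of `n` makes
`n^{-s₁} Φ₂(s₂; a n)` a constant times a multiplicative function of `n`, so `F_a` is `T` times a
finite Euler product over `p ≤ y`. On the right, `ζ(s₁,y) = ∏_{p ≤ y} (1 - p^{-s₁})⁻¹` and the
`p`-factor of `ψ₂` is the inverse of the `p`-factor of `F₁`. The local factors at `p ≤ y` then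
agree: both are `(1 - p^{-s₁})⁻¹` when `p ∣ a` and `(1 - p^{-s₁})⁻¹ + E_p - 1` otherwise. -/

section EulerFactors

variable {p : ℕ} {s s₁ s₂ : ℂ}

def totientFactor (s : ℂ) (p : ℕ) : ℂ := 1 + 1 / ((1 - 1 / (p : ℂ)) * ((p : ℂ) ^ (s + 1) - 1))

def zetaFactor (s : ℂ) (p : ℕ) : ℂ := (1 - (p : ℂ) ^ (-s))⁻¹

def friableFactor (s₁ s₂ : ℂ) (p : ℕ) : ℂ :=
  1 + (1 - (p : ℂ) ^ (-s₁)) / ((1 - 1 / (p : ℂ)) * ((p : ℂ) ^ (s₂ + 1) - 1))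

lemma Nat.Prime.one_lt_norm_natCast_cpow (hp : p.Prime) (hs : 0 < s.re) : 1 < ‖(p : ℂ) ^ s‖ := by
  rw [Complex.norm_natCast_cpow_of_pos hp.pos]
  exact Real.one_lt_rpow (by exact_mod_cast hp.one_lt) hs

lemma Nat.Prime.norm_natCast_cpow_lt_one (hp : p.Prime) (hs : s.re < 0) : ‖(p : ℂ) ^ s‖ < 1 := by
  rw [Complex.norm_natCast_cpow_of_pos hp.pos]
  exact Real.rpow_lt_one_of_one_lt_of_neg (by exact_mod_cast hp.one_lt) hs

lemma Nat.Prime.norm_natCast_sub_one (hp : p.Prime) : ‖(p : ℂ) - 1‖ = p - 1 := by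
  rw [show (p : ℂ) - 1 = ((p - 1 : ℝ) : ℂ) by push_cast; ring, Complex.norm_real,
    Real.norm_of_nonneg (by linarith [show (1 : ℝ) ≤ p by exact_mod_cast hp.one_le])]

lemma Nat.Prime.natCast_sub_one_ne_zero (hp : p.Prime) : (p : ℂ) - 1 ≠ 0 :=
  sub_ne_zero.mpr (by exact_mod_cast hp.ne_one)

lemma Nat.Prime.natCast_cpow_ne_one (hp : p.Prime) (hs : s.re ≠ 0) : (p : ℂ) ^ s ≠ 1 := by
  intro h
  rcases hs.lt_or_gt with hs | hs
  · exact (hp.norm_natCast_cpow_lt_one hs).ne (by rw [h, norm_one])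
  · exact (hp.one_lt_norm_natCast_cpow hs).ne' (by rw [h, norm_one])

lemma Nat.Prime.natCast_cpow_ne_zero (hp : p.Prime) (s : ℂ) : (p : ℂ) ^ s ≠ 0 :=
  fun h => hp.ne_zero (by exact_mod_cast ((Complex.cpow_eq_zero_iff _ _).mp h).1)

lemma one_add_div_ne_zero_of_norm_lt (hp : p.Prime) {z w : ℂ}
    (h : ‖p * w - 1‖ < (p - 1) * ‖z‖) : 1 + (1 - w) / ((1 - 1 / (p : ℂ)) * (z - 1)) ≠ 0 := by
  have hp0 : (p : ℂ) ≠ 0 := by exact_mod_cast hp.ne_zero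
  intro h0
  have hc : (1 - 1 / (p : ℂ)) * (z - 1) ≠ 0 := by
    intro hc
    rw [hc, div_zero, add_zero] at h0
    exact one_ne_zero h0
  have key : ((p : ℂ) - 1) * z = p * w - 1 := by
    rw [add_eq_zero_iff_eq_neg', div_eq_iff hc] at h0
    field_simp at h0
    linear_combination h0
  rw [← key, norm_mul, hp.norm_natCast_sub_one] at h
  exact lt_irrefl _ h

lemma totientFactor_ne_zero (hp : p.Prime) (hs : -1 < s.re) : totientFactor s p ≠ 0 := by
  have hz : 1 < ‖(p : ℂ) ^ (s + 1)‖ := hp.one_lt_norm_natCast_cpow (by simp; linarith)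
  have hp1 : (1 : ℝ) ≤ p - 1 := by linarith [show (2 : ℝ) ≤ p by exact_mod_cast hp.two_le]
  have h := one_add_div_ne_zero_of_norm_lt hp (z := (p : ℂ) ^ (s + 1)) (w := 0)
    (by rw [mul_zero, zero_sub, norm_neg, norm_one]; nlinarith)
  rwa [sub_zero] at h

lemma friableFactor_ne_zero (hp : p.Prime) (h1 : 0 < s₁.re) (h2 : 1 ≤ s₂.re) :
    friableFactor s₁ s₂ p ≠ 0 := by
  have hp2 : (2 : ℝ) ≤ p := by exact_mod_cast hp.two_le
  have hw : ‖(p : ℂ) ^ (-s₁)‖ < 1 := hp.norm_natCast_cpow_lt_one (by simpa using h1)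
  have hz : (p : ℝ) ^ 2 ≤ ‖(p : ℂ) ^ (s₂ + 1)‖ := by
    rw [Complex.norm_natCast_cpow_of_pos hp.pos, ← Real.rpow_natCast]
    exact Real.rpow_le_rpow_of_exponent_le (by linarith) (by simp; linarith)
  refine one_add_div_ne_zero_of_norm_lt hp ?_
  calc ‖(p : ℂ) * (p : ℂ) ^ (-s₁) - 1‖ ≤ p * ‖(p : ℂ) ^ (-s₁)‖ + 1 := by
        simpa [norm_mul] using norm_sub_le ((p : ℂ) * (p : ℂ) ^ (-s₁)) 1
    _ < p + 1 := by nlinarith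
    _ ≤ (p - 1) * p ^ 2 := by nlinarith
    _ ≤ (p - 1) * ‖(p : ℂ) ^ (s₂ + 1)‖ := by gcongr; linarith

lemma psi2Factor_eq_friableFactor_mul (hp : p.Prime) (hs : -1 < s₂.re) :
    1 + (1 - (p : ℂ) ^ ((1 : ℂ) - s₁)) / ((1 - 1 / (p : ℂ)) * (p : ℂ) ^ (s₂ + 2)) =
      friableFactor s₁ s₂ p * (1 - (p : ℂ) ^ (-(s₂ + 1))) := by
  have hp0 : (p : ℂ) ≠ 0 := by exact_mod_cast hp.ne_zero
  have hp1 := hp.natCast_sub_one_ne_zero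
  have hz0 := hp.natCast_cpow_ne_zero (s₂ + 1)
  have hz1 : (p : ℂ) ^ (s₂ + 1) - 1 ≠ 0 :=
    sub_ne_zero.mpr (hp.natCast_cpow_ne_one (by simp; linarith))
  rw [friableFactor, show s₂ + 2 = s₂ + 1 + 1 by ring, show (1 : ℂ) - s₁ = -s₁ + 1 by ring,
    Complex.cpow_add _ _ hp0, Complex.cpow_add _ _ hp0, Complex.cpow_one,
    Complex.cpow_neg _ (s₂ + 1)]
  field_simp
  ring

lemma zetaFactor_mul_friableFactor (h : (p : ℂ) ^ (-s₁) ≠ 1) :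
    zetaFactor s₁ p * friableFactor s₁ s₂ p = zetaFactor s₁ p + totientFactor s₂ p - 1 := by
  rw [zetaFactor, friableFactor, totientFactor, mul_add, mul_one, mul_div_assoc',
    inv_mul_cancel₀ (sub_ne_zero.mpr h.symm)]
  ring

lemma psi2_eq_prod_inv_friableFactor (a : ℤ) (hs : -1 < s₂.re) :
    psi2 s₁ s₂ a = ∏ p ∈ a.natAbs.primeFactors, (friableFactor s₁ s₂ p)⁻¹ := by
  rw [psi2, gI, ← Finset.prod_mul_distrib]
  refine Finset.prod_congr rfl fun p hp => ?_
  have hp := Nat.prime_of_mem_primeFactors hp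
  have hz : (1 : ℂ) - (p : ℂ) ^ (-(s₂ + 1)) ≠ 0 :=
    sub_ne_zero.mpr (hp.natCast_cpow_ne_one (by simp; linarith)).symm
  rw [psi2Factor_eq_friableFactor_mul hp hs, mul_inv_rev, mul_inv_cancel_left₀ hz]

end EulerFactors

lemma hasSum_of_succ_eq_mul_geometric {f : ℕ → ℂ} {c r : ℂ} (hr : ‖r‖ < 1) (h0 : f 0 = 1)
    (hf : ∀ e, f (e + 1) = c * r ^ (e + 1)) : HasSum f (1 + c * ((1 - r)⁻¹ - 1)) := by
  have hgeom := (hasSum_nat_add_iff' (f := (r ^ ·)) 1).mpr (hasSum_geometric_of_norm_lt_one hr)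
  rw [Finset.sum_range_one, pow_zero] at hgeom
  refine (hasSum_nat_add_iff' (f := f) 1).mp ?_
  rw [Finset.sum_range_one, h0, add_sub_cancel_left]
  simpa only [hf] using hgeom.mul_left c

lemma summable_norm_of_succ_eq_mul_geometric {f : ℕ → ℂ} {c r : ℂ} (hr : ‖r‖ < 1)
    (hf : ∀ e, f (e + 1) = c * r ^ (e + 1)) : Summable (‖f ·‖) := by
  refine (summable_nat_add_iff 1).mp ?_
  have h := (summable_geometric_of_lt_one (norm_nonneg r) hr).mul_left (‖c‖ * ‖r‖)
  refine h.congr fun e => ?_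
  rw [hf, norm_mul, norm_pow, pow_succ']
  ring

lemma natCast_pow_cpow (p e : ℕ) (s : ℂ) : ((p ^ e : ℕ) : ℂ) ^ s = ((p : ℂ) ^ s) ^ e := by
  rw [Nat.cast_pow, ← Complex.natCast_cpow_natCast_mul, Complex.cpow_nat_mul]

section Phi2

variable {s : ℂ} {k m n p : ℕ}

def phi2Term (s : ℂ) (k n : ℕ) : ℂ :=
  if 1 ≤ n ∧ n.Coprime k then 1 / ((n.totient : ℂ) * (n : ℂ) ^ s) else 0

lemma phi2Term_one : phi2Term s k 1 = 1 := by simp [phi2Term]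

lemma phi2Term_mul (h : m.Coprime n) : phi2Term s k (m * n) = phi2Term s k m * phi2Term s k n := by
  rcases eq_or_ne m 0 with rfl | hm
  · simp [phi2Term]
  rcases eq_or_ne n 0 with rfl | hn
  · simp [phi2Term]
  simp only [phi2Term, Nat.coprime_mul_iff_left, Nat.one_le_iff_ne_zero, ne_eq, mul_eq_zero, hm, hn,
    not_false_eq_true, or_self, true_and, Nat.totient_mul h, Nat.cast_mul,
    Complex.natCast_mul_natCast_cpow]
  split_ifs <;> simp_all
  ring

lemma norm_phi2Term_le (n : ℕ) : ‖phi2Term s k n‖ ≤ (n : ℝ) ^ (-s.re) := by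
  unfold phi2Term
  split_ifs with hn
  · have hφ : (1 : ℝ) ≤ n.totient := by exact_mod_cast Nat.totient_pos.mpr hn.1
    rw [norm_div, norm_one, norm_mul, Complex.norm_natCast, Complex.norm_natCast_cpow_of_pos hn.1,
      Real.rpow_neg (Nat.cast_nonneg n), ← one_div]
    have hpos : (0 : ℝ) < (n : ℝ) ^ s.re := Real.rpow_pos_of_pos (by exact_mod_cast hn.1) _
    exact one_div_le_one_div_of_le hpos (le_mul_of_one_le_left hpos.le hφ)
  · rw [norm_zero]
    positivity

lemma summable_norm_phi2Term (hs : 1 < s.re) : Summable (‖phi2Term s k ·‖) :=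
  (Real.summable_nat_rpow.mpr (by linarith)).of_nonneg_of_le (fun _ => norm_nonneg _)
    norm_phi2Term_le

lemma phi2Term_prime_pow_succ (hp : p.Prime) (hpk : ¬p ∣ k) (e : ℕ) :
    phi2Term s k (p ^ (e + 1)) = (p / (p - 1) : ℂ) * (((p : ℂ) ^ (s + 1))⁻¹) ^ (e + 1) := by
  have hp0 : (p : ℂ) ≠ 0 := by exact_mod_cast hp.ne_zero
  have hp1 := hp.natCast_sub_one_ne_zero
  have hps := hp.natCast_cpow_ne_zero s
  rw [phi2Term, if_pos ⟨Nat.one_le_iff_ne_zero.mpr (pow_ne_zero _ hp.ne_zero),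
      Nat.Coprime.pow_left _ ((Nat.Prime.coprime_iff_not_dvd hp).mpr hpk)⟩,
    Nat.totient_prime_pow_succ hp, natCast_pow_cpow, Nat.cast_mul, Nat.cast_pow,
    Nat.cast_sub hp.one_le, Nat.cast_one, Complex.cpow_add _ _ hp0, Complex.cpow_one]
  rw [inv_pow, mul_pow]
  field_simp
  ring

lemma hasSum_phi2Term_prime_pow (hp : p.Prime) (hs : -1 < s.re) (hpk : ¬p ∣ k) :
    HasSum (fun e => phi2Term s k (p ^ e)) (totientFactor s p) := by
  have hp0 : (p : ℂ) ≠ 0 := by exact_mod_cast hp.ne_zero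
  have hp1 := hp.natCast_sub_one_ne_zero
  have hz : 1 < ‖(p : ℂ) ^ (s + 1)‖ := hp.one_lt_norm_natCast_cpow (by simp; linarith)
  have hz0 := hp.natCast_cpow_ne_zero (s + 1)
  have hz1 : (p : ℂ) ^ (s + 1) - 1 ≠ 0 :=
    sub_ne_zero.mpr (hp.natCast_cpow_ne_one (by simp; linarith))
  have hr : ‖((p : ℂ) ^ (s + 1))⁻¹‖ < 1 := by rw [norm_inv]; exact inv_lt_one_of_one_lt₀ hz
  convert hasSum_of_succ_eq_mul_geometric (f := fun e => phi2Term s k (p ^ e)) hr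
    (by rw [pow_zero, phi2Term_one]) (phi2Term_prime_pow_succ hp hpk) using 1
  rw [totientFactor]
  field_simp
  ring

lemma hasSum_phi2Term_prime_pow_of_dvd (hp : p.Prime) (hpk : p ∣ k) :
    HasSum (fun e => phi2Term s k (p ^ e)) 1 := by
  convert hasSum_single 0 fun e he => ?_
  · rw [pow_zero, phi2Term_one]
  · rw [phi2Term, if_neg fun h => ?_]
    exact hp.coprime_iff_not_dvd.mp (h.2.coprime_dvd_left (dvd_pow_self p he)) hpk

lemma hasProd_Phi2 (a : ℤ) (hs : 1 < s.re) :
    HasProd (fun p : Nat.Primes => if (p : ℕ) ∣ a.natAbs then 1 else totientFactor s p)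
      (Phi2 s a) := by
  convert EulerProduct.eulerProduct_hasProd phi2Term_one phi2Term_mul
    (summable_norm_phi2Term hs) (by simp [phi2Term]) using 1
  · funext p
    split_ifs with h
    · exact (hasSum_phi2Term_prime_pow_of_dvd p.prop h).tsum_eq.symm
    · exact (hasSum_phi2Term_prime_pow p.prop (by linarith) h).tsum_eq.symm
  · rfl

end Phi2

section Friable

variable {y : ℝ} {s : ℂ}

lemma friable_iff_mem_smoothNumbers (hy : 1 ≤ y) (n : ℕ) :
    1 ≤ n ∧ (Pmax n : ℝ) ≤ y ↔ n ∈ Nat.smoothNumbers (⌊y⌋₊ + 1) := by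
  have h1 : 1 ≤ ⌊y⌋₊ := Nat.le_floor (by exact_mod_cast hy)
  rw [Nat.mem_smoothNumbers_iff_primeFactors_subset, Pmax, ← Nat.le_floor_iff (by linarith),
    max_le_iff, Finset.sup_le_iff]
  simp only [Finset.subset_iff, Nat.mem_primesBelow, Nat.lt_succ_iff, id, h1, true_and,
    Nat.one_le_iff_ne_zero]
  exact and_congr_right fun _ => forall₂_congr fun p hp =>
    (and_iff_left (Nat.prime_of_mem_primeFactors hp)).symm

lemma tsum_ite_friable (hy : 1 ≤ y) (f : ℕ → ℂ) :
    ∑' n, (if 1 ≤ n ∧ (Pmax n : ℝ) ≤ y then f n else 0) =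
      ∑' n : Nat.smoothNumbers (⌊y⌋₊ + 1), f n := by
  rw [_root_.tsum_subtype]
  exact tsum_congr fun n => by
    rw [Set.indicator_apply]; exact if_congr (friable_iff_mem_smoothNumbers hy n) rfl rfl

lemma mem_primesBelow_floor_iff (hy : 0 ≤ y) {p : ℕ} :
    p ∈ Nat.primesBelow (⌊y⌋₊ + 1) ↔ p.Prime ∧ (p : ℝ) ≤ y := by
  rw [Nat.mem_primesBelow, Nat.lt_succ_iff, Nat.le_floor_iff hy, and_comm]

lemma hasProd_primes_ite_le (g : ℕ → ℂ) (hy : 0 ≤ y) :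
    HasProd (fun p : Nat.Primes => if ((p : ℕ) : ℝ) ≤ y then g p else 1)
      (∏ p ∈ Nat.primesBelow (⌊y⌋₊ + 1), g p) := by
  set f : ℕ → ℂ := fun n => if n.Prime ∧ (n : ℝ) ≤ y then g n else 1 with hf
  have hfin : HasProd f (∏ p ∈ Nat.primesBelow (⌊y⌋₊ + 1), f p) :=
    hasProd_prod_of_ne_finset_one fun n hn => if_neg ((mem_primesBelow_floor_iff hy).not.mp hn)
  rw [Finset.prod_congr rfl fun p hp => if_pos ((mem_primesBelow_floor_iff hy).mp hp)] at hfin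
  have hrange (n : ℕ) (hn : n ∉ Set.range ((↑) : Nat.Primes → ℕ)) : f n = 1 :=
    if_neg fun h => hn ⟨⟨n, h.1⟩, rfl⟩
  have hcomp : f ∘ ((↑) : Nat.Primes → ℕ) =
      fun p : Nat.Primes => if ((p : ℕ) : ℝ) ≤ y then g p else 1 := by
    funext p
    simp only [hf, Function.comp_apply, p.prop, true_and]
  rw [← hcomp]
  exact (Nat.Primes.coe_nat_injective.hasProd_iff hrange).mpr hfin

lemma prod_primeFactors_eq_prod_primesBelow {N n : ℕ} (hn : n ∈ N.smoothNumbers) (f : ℕ → ℂ) :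
    ∏ p ∈ n.primeFactors, f p = ∏ p ∈ N.primesBelow, if p ∣ n then f p else 1 := by
  rw [← Finset.prod_filter]
  congr 1
  ext p
  rw [Finset.mem_filter, Nat.mem_primeFactors_of_ne_zero hn.1]
  exact ⟨fun h => ⟨Nat.primeFactors_subset_of_mem_smoothNumbers hn
    (Nat.mem_primeFactors_of_ne_zero hn.1 |>.mpr h), h.2⟩,
    fun h => ⟨Nat.prime_of_mem_primesBelow h.1, h.2⟩⟩

def totientTail (s : ℂ) (y : ℝ) : ℂ :=
  ∏' p : Nat.Primes, if y < ((p : ℕ) : ℝ) then totientFactor s p else 1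

lemma Phi2_eq_totientTail_mul (hs : 1 < s.re) (hy : 0 ≤ y) {m : ℤ}
    (hm : ∀ p, p.Prime → p ∣ m.natAbs → (p : ℝ) ≤ y) :
    Phi2 s m = totientTail s y *
      ∏ p ∈ Nat.primesBelow (⌊y⌋₊ + 1), if p ∣ m.natAbs then 1 else totientFactor s p := by
  set g : ℕ → ℂ := fun p => if p ∣ m.natAbs then 1 else totientFactor s p
  have hg0 (p : ℕ) (hp : p.Prime) : g p ≠ 0 := by
    dsimp only [g]; split_ifs
    exacts [one_ne_zero, totientFactor_ne_zero hp (by linarith)]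
  have hU0 : ∏ p ∈ Nat.primesBelow (⌊y⌋₊ + 1), g p ≠ 0 :=
    Finset.prod_ne_zero_iff.mpr fun p hp => hg0 p (Nat.prime_of_mem_primesBelow hp)
  -- the tail is the full Euler product divided by its finitely many factors at `p ≤ y`
  have htail := (hasProd_Phi2 m hs).div₀ (hasProd_primes_ite_le g hy) hU0
  have hT : totientTail s y = Phi2 s m / ∏ p ∈ Nat.primesBelow (⌊y⌋₊ + 1), g p := by
    refine (tprod_congr fun p => ?_).trans htail.tprod_eq
    by_cases hpy : ((p : ℕ) : ℝ) ≤ y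
    · rw [if_neg (not_lt.mpr hpy), if_pos hpy, div_self (hg0 p p.prop)]
    · rw [if_pos (lt_of_not_ge hpy), if_neg hpy, div_one, if_neg fun h => hpy (hm p p.prop h)]
  rw [hT, div_mul_cancel₀ _ hU0]

lemma zetaY_eq_prod_zetaFactor (hy : 1 ≤ y) (hs : 0 < s.re) :
    zetaY s y = ∏ p ∈ Nat.primesBelow (⌊y⌋₊ + 1), zetaFactor s p := by
  have hs0 : s ≠ 0 := fun h => by simp [h] at hs
  rw [zetaY, tsum_ite_friable hy]
  exact ((EulerProduct.summable_and_hasSum_smoothNumbers_prod_primesBelow_geometric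
    (f := (riemannZetaSummandHom hs0 : ℕ →* ℂ))
    (fun hp => hp.norm_natCast_cpow_lt_one (by simpa using hs)) _).2).tsum_eq

end Friable

section TwistedWeight

variable {s₁ s₂ : ℂ} {k m n p N : ℕ}

def twistedWeight (s₁ s₂ : ℂ) (k n : ℕ) : ℂ :=
  (n : ℂ) ^ (-s₁) * ∏ p ∈ n.primeFactors, if p ∣ k then 1 else (totientFactor s₂ p)⁻¹

lemma twistedWeight_one : twistedWeight s₁ s₂ k 1 = 1 := by simp [twistedWeight]

lemma twistedWeight_mul (h : m.Coprime n) :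
    twistedWeight s₁ s₂ k (m * n) = twistedWeight s₁ s₂ k m * twistedWeight s₁ s₂ k n := by
  rcases eq_or_ne m 0 with rfl | hm
  · rw [(Nat.coprime_zero_left n).mp h, mul_one, twistedWeight_one, mul_one]
  rcases eq_or_ne n 0 with rfl | hn
  · rw [(Nat.coprime_zero_right m).mp h, one_mul, twistedWeight_one, one_mul]
  rw [twistedWeight, Nat.primeFactors_mul hm hn, Finset.prod_union h.disjoint_primeFactors,
    Nat.cast_mul, Complex.natCast_mul_natCast_cpow, twistedWeight, twistedWeight]
  ring

lemma twistedWeight_prime_pow_succ (hp : p.Prime) (e : ℕ) :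
    twistedWeight s₁ s₂ k (p ^ (e + 1)) =
      (if p ∣ k then 1 else (totientFactor s₂ p)⁻¹) * ((p : ℂ) ^ (-s₁)) ^ (e + 1) := by
  rw [twistedWeight, Nat.primeFactors_prime_pow (Nat.succ_ne_zero e) hp, Finset.prod_singleton,
    natCast_pow_cpow, mul_comm]

lemma hasSum_twistedWeight_smoothNumbers (h1 : 0 < s₁.re) (N : ℕ) :
    HasSum (fun n : N.smoothNumbers => twistedWeight s₁ s₂ k n)
      (∏ p ∈ N.primesBelow,
        (1 + (if p ∣ k then 1 else (totientFactor s₂ p)⁻¹) * (zetaFactor s₁ p - 1))) := by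
  have hr {p : ℕ} (hp : p.Prime) : ‖(p : ℂ) ^ (-s₁)‖ < 1 :=
    hp.norm_natCast_cpow_lt_one (by simpa using h1)
  have hlocal {p : ℕ} (hp : p.Prime) :
      HasSum (fun e => twistedWeight s₁ s₂ k (p ^ e))
        (1 + (if p ∣ k then 1 else (totientFactor s₂ p)⁻¹) * (zetaFactor s₁ p - 1)) :=
    hasSum_of_succ_eq_mul_geometric (hr hp) (by rw [pow_zero, twistedWeight_one])
      (twistedWeight_prime_pow_succ hp)
  rw [Finset.prod_congr rfl fun p hp => (hlocal (Nat.prime_of_mem_primesBelow hp)).tsum_eq.symm]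
  exact (EulerProduct.summable_and_hasSum_smoothNumbers_prod_primesBelow_tsum
    twistedWeight_one twistedWeight_mul
    (fun hp => summable_norm_of_succ_eq_mul_geometric (hr hp) (twistedWeight_prime_pow_succ hp))
    N).2

lemma prod_primesBelow_ite_dvd_mul (hn : n ∈ N.smoothNumbers) (h2 : -1 < s₂.re) :
    ∏ p ∈ N.primesBelow, (if p ∣ k * n then 1 else totientFactor s₂ p) =
      (∏ p ∈ N.primesBelow, if p ∣ k then 1 else totientFactor s₂ p) *
        ∏ p ∈ n.primeFactors, if p ∣ k then 1 else (totientFactor s₂ p)⁻¹ := by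
  rw [prod_primeFactors_eq_prod_primesBelow hn, ← Finset.prod_mul_distrib]
  refine Finset.prod_congr rfl fun p hp => ?_
  have hp := Nat.prime_of_mem_primesBelow hp
  by_cases hpk : p ∣ k
  · simp [hpk, hpk.mul_right]
  by_cases hpn : p ∣ n
  · simp [hpk, hpn, hpn.mul_left, totientFactor_ne_zero hp h2]
  · simp [hpk, hpn, hp.dvd_mul]

end TwistedWeight

section Factorization

variable {y : ℝ} {s₁ s₂ : ℂ} {a : ℤ}

lemma Fa_eq_totientTail_mul_prod (hy : 1 ≤ y) (ha : a.natAbs ∈ (⌊y⌋₊ + 1).smoothNumbers)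
    (h1 : 0 < s₁.re) (h2 : 1 < s₂.re) :
    Fa a s₁ s₂ y = totientTail s₂ y * ∏ p ∈ (⌊y⌋₊ + 1).primesBelow,
      (if p ∣ a.natAbs then 1 else totientFactor s₂ p) *
        (1 + (if p ∣ a.natAbs then 1 else (totientFactor s₂ p)⁻¹) * (zetaFactor s₁ p - 1)) := by
  have hy0 : 0 ≤ y := by linarith
  rw [Fa, tsum_ite_friable hy, Finset.prod_mul_distrib,
    ← (hasSum_twistedWeight_smoothNumbers h1 _).tsum_eq, ← mul_assoc, ← tsum_mul_left]
  refine tsum_congr fun n => ?_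
  have hmul : (a * (n : ℕ)).natAbs = a.natAbs * n := by rw [Int.natAbs_mul, Int.natAbs_natCast]
  have han := Nat.mul_mem_smoothNumbers ha n.2
  have hle (p : ℕ) (hp : p.Prime) (hpd : p ∣ (a * (n : ℕ)).natAbs) : (p : ℝ) ≤ y := by
    rw [hmul] at hpd
    exact ((mem_primesBelow_floor_iff hy0).mp
      (Nat.mem_primesBelow.mpr ⟨Nat.mem_smoothNumbers'.mp han p hp hpd, hp⟩)).2
  rw [Phi2_eq_totientTail_mul h2 hy0 hle, hmul, prod_primesBelow_ite_dvd_mul n.2 (by linarith),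
    twistedWeight]
  ring

lemma F1_mul_psi2_eq_totientTail_mul_prod (hy : 1 ≤ y)
    (ha : a.natAbs ∈ (⌊y⌋₊ + 1).smoothNumbers) (h1 : 0 < s₁.re) (h2 : -1 < s₂.re) :
    F1 s₁ s₂ y * psi2 s₁ s₂ a = totientTail s₂ y * ∏ p ∈ (⌊y⌋₊ + 1).primesBelow,
      zetaFactor s₁ p * friableFactor s₁ s₂ p *
        (if p ∣ a.natAbs then (friableFactor s₁ s₂ p)⁻¹ else 1) := by
  have hF1 : F1 s₁ s₂ y = zetaY s₁ y * totientTail s₂ y *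
      ∏' p : Nat.Primes, if ((p : ℕ) : ℝ) ≤ y then friableFactor s₁ s₂ p else 1 := rfl
  rw [hF1, (hasProd_primes_ite_le _ (by linarith)).tprod_eq, zetaY_eq_prod_zetaFactor hy h1,
    psi2_eq_prod_inv_friableFactor a h2, prod_primeFactors_eq_prod_primesBelow ha,
    Finset.prod_mul_distrib, Finset.prod_mul_distrib]
  ring

lemma eulerFactor_Fa_eq_eulerFactor_F1_mul_psi2 {p : ℕ} (hp : p.Prime) (h1 : 0 < s₁.re)
    (h2 : 1 ≤ s₂.re) (k : ℕ) :
    (if p ∣ k then 1 else totientFactor s₂ p) *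
        (1 + (if p ∣ k then 1 else (totientFactor s₂ p)⁻¹) * (zetaFactor s₁ p - 1)) =
      zetaFactor s₁ p * friableFactor s₁ s₂ p *
        (if p ∣ k then (friableFactor s₁ s₂ p)⁻¹ else 1) := by
  split_ifs
  · rw [mul_inv_cancel_right₀ (friableFactor_ne_zero hp h1 h2)]
    ring
  · rw [zetaFactor_mul_friableFactor (hp.natCast_cpow_ne_one (by simp; linarith)), mul_one,
      mul_add, mul_one, ← mul_assoc,
      mul_inv_cancel₀ (totientFactor_ne_zero hp (by linarith)), one_mul]
    ring

end Factorization

/-- factorization of F_a. -/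
theorem stmt9 (y : ℝ) (a : ℤ) (ha : a ≠ 0) (hay : (a.natAbs : ℝ) ≤ y)
    (s₁ s₂ : ℂ) (h1 : 0 < s₁.re) (h2 : 1 < s₂.re) :
    Fa a s₁ s₂ y = F1 s₁ s₂ y * psi2 s₁ s₂ a := by
  have hy : 1 ≤ y := le_trans (by exact_mod_cast Int.natAbs_pos.mpr ha) hay
  have hsmooth : a.natAbs ∈ (⌊y⌋₊ + 1).smoothNumbers :=
    Nat.mem_smoothNumbers_of_lt (Int.natAbs_pos.mpr ha) (Nat.lt_succ_of_le (Nat.le_floor hay))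
  rw [Fa_eq_totientTail_mul_prod hy hsmooth h1 h2,
    F1_mul_psi2_eq_totientTail_mul_prod hy hsmooth h1 (by linarith)]
  exact congrArg _ (Finset.prod_congr rfl fun p hp =>
    eulerFactor_Fa_eq_eulerFactor_F1_mul_psi2 (Nat.prime_of_mem_primesBelow hp) h1 h2.le _)
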